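/- arXiv:1607.05848 — 2 statements merged into one kernel-verified Lean document; each statement's English description precedes it below -/
import Mathlib

section
/- Let G be a topological group and X a nonempty topological space equipped with a continuous G-action, and let G carry the G-action on itself by left translation. Assume there exists a continuous G-equivariant map X → G, and assume that X admits a G-equivariant Moore approximation of degree k for some integer k > 0, i.e., there is a topological space X' with a continuous G-action and a continuous G-equivariant map f : X' → X such that the induced map H_r(X';ℚ) → H_r(X;ℚ) on singular homology is an isomorphism for all r < k and H_r(X';ℚ) = 0 for all r ≥ k. Then H_m(G;ℚ) = 0 for all m ≥ k; that is, the rational homological dimension of G is at most k − 1. -/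
open CategoryTheory AlgebraicTopology

noncomputable section

/-- The singular chain complex functor with rational coefficients. -/
def singularChainFunctor : TopCat.{0} ⥤ ChainComplex (ModuleCat.{0} ℚ) ℕ :=
  TopCat.toSSet ⋙ ((SimplicialObject.whiskering _ _).obj (ModuleCat.free ℚ)) ⋙
    alternatingFaceMapComplex _

/-- Singular homology with rational coefficients, as a functor. -/
def SH (n : ℕ) : TopCat.{0} ⥤ ModuleCat.{0} ℚ :=
  singularChainFunctor ⋙ HomologicalComplex.homologyFunctor _ _ n

/-- The `n`-th singular homology of a topological space, with `ℚ`-coefficients. -/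
def Hq (n : ℕ) (X : Type) [TopologicalSpace X] : ModuleCat.{0} ℚ :=
  (SH n).obj (TopCat.of X)

/-- The map induced on rational singular homology by a continuous map. -/
def Hmap {X Y : Type} [TopologicalSpace X] [TopologicalSpace Y]
    (f : C(X, Y)) (n : ℕ) : Hq n X →ₗ[ℚ] Hq n Y :=
  ((SH n).map (X := TopCat.of X) (Y := TopCat.of Y) (TopCat.ofHom f)).hom

/-! The Moore approximation composed with the equivariant map to `G` is an equivariant map
`ψ : X' → G`. Since `H₀(X;ℚ) ≠ 0` (the augmentation sends the class of a point to `1`) and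
`H₀(X';ℚ) → H₀(X;ℚ)` is onto, `X'` is nonempty. For any `x' : X'` the orbit map
`g ↦ g • ψ(x')⁻¹ • x'` is a continuous section of `ψ`, so `G` is a retract of `X'` and
`H_m(G;ℚ)` is a retract of `H_m(X';ℚ) = 0` for `m ≥ k`. -/

open Simplicial

theorem Hmap_comp_apply {X Y Z : Type} [TopologicalSpace X] [TopologicalSpace Y]
    [TopologicalSpace Z] (f : C(X, Y)) (g : C(Y, Z)) (n : ℕ) (x : Hq n X) :
    Hmap (g.comp f) n x = Hmap g n (Hmap f n x) := by
  change ((SH n).map (TopCat.ofHom f ≫ TopCat.ofHom g)).hom x = _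
  rw [Functor.map_comp]
  rfl

theorem Hmap_id_apply {X : Type} [TopologicalSpace X] (n : ℕ) (x : Hq n X) :
    Hmap (ContinuousMap.id X) n x = x := by
  change ((SH n).map (𝟙 (TopCat.of X))).hom x = x
  rw [CategoryTheory.Functor.map_id]
  rfl

theorem Hq_subsingleton_of_retract {A B : Type} [TopologicalSpace A] [TopologicalSpace B]
    (r : C(A, B)) (s : C(B, A)) (hrs : r.comp s = ContinuousMap.id B) (n : ℕ)
    [Subsingleton (Hq n A)] : Subsingleton (Hq n B) := by
  have : Function.LeftInverse (Hmap r n) (Hmap s n) := fun c => by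
    rw [← Hmap_comp_apply, hrs, Hmap_id_apply]
  exact this.surjective.subsingleton

theorem Hq_subsingleton_of_equivariant_map_to_group {G Y : Type} [Group G] [TopologicalSpace G]
    [TopologicalSpace Y] [MulAction G Y] [ContinuousSMul G Y] [Nonempty Y]
    (ψ : C(Y, G)) (hψ : ∀ (g : G) (y : Y), ψ (g • y) = g * ψ y) (n : ℕ)
    [Subsingleton (Hq n Y)] : Subsingleton (Hq n G) := by
  obtain ⟨y⟩ := ‹Nonempty Y›
  refine Hq_subsingleton_of_retract ψ ⟨fun g => g • (ψ y)⁻¹ • y, by fun_prop⟩ ?_ n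
  ext g
  simp [hψ]

abbrev freeChainComplex (S : SSet.{0}) : ChainComplex (ModuleCat.{0} ℚ) ℕ :=
  (alternatingFaceMapComplex _).obj
    (((SimplicialObject.whiskering _ _).obj (ModuleCat.free ℚ)).obj S)

theorem freeChainComplex_homology_subsingleton (S : SSet.{0}) (n : ℕ) [IsEmpty (S _⦋n⦌)] :
    Subsingleton ((freeChainComplex S).homology n) := by
  set K := freeChainComplex S
  have : Subsingleton (K.X n) := inferInstanceAs (Subsingleton (S _⦋n⦌ →₀ ℚ))
  have : Subsingleton (K.cycles n) :=
    ((ModuleCat.mono_iff_injective (K.iCycles n)).mp inferInstance).subsingleton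
  exact ((ModuleCat.epi_iff_surjective (K.homologyπ n)).mp inferInstance).subsingleton

def augmentation (A : Type) : (ModuleCat.free ℚ).obj A ⟶ ModuleCat.of ℚ ℚ :=
  ModuleCat.freeDesc (TypeCat.ofHom fun _ => (1 : ℚ))

theorem augmentation_freeMk {A : Type} (a : A) :
    augmentation A (ModuleCat.freeMk a) = 1 := by
  rw [augmentation, ModuleCat.freeDesc_apply]
  rfl

theorem free_map_comp_augmentation {A B : Type} (g : A ⟶ B) :
    (ModuleCat.free ℚ).map g ≫ augmentation B = augmentation A := by
  ext a
  rw [ConcreteCategory.comp_apply, ModuleCat.free_map_apply, augmentation_freeMk,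
    augmentation_freeMk]

theorem freeChainComplex_d_comp_augmentation (S : SSet.{0}) :
    (freeChainComplex S).d 1 0 ≫ augmentation (S _⦋0⦌) = 0 := by
  erw [AlternatingFaceMapComplex.obj_d_eq, Preadditive.sum_comp, Fin.sum_univ_two,
    Preadditive.zsmul_comp, Preadditive.zsmul_comp, free_map_comp_augmentation,
    free_map_comp_augmentation]
  simp only [Fin.val_zero, Fin.val_one, pow_zero, pow_one]
  erw [one_smul, neg_one_zsmul, add_neg_cancel]

theorem freeChainComplex_homology_zero_nontrivial (S : SSet.{0}) (s : S _⦋0⦌) :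
    Nontrivial ((freeChainComplex S).homology 0) := by
  set K := freeChainComplex S
  let ε : K.homology 0 ⟶ ModuleCat.of ℚ ℚ := K.homologyι 0 ≫
    K.descOpcycles (augmentation _) 1 (by simp) (freeChainComplex_d_comp_augmentation S)
  let σ : ModuleCat.of ℚ ℚ ⟶ K.X 0 := ModuleCat.ofHom (Finsupp.lsingle s)
  let cls : ModuleCat.of ℚ ℚ ⟶ K.homology 0 :=
    K.liftCycles σ 0 (by simp) (by rw [K.shape 0 0 (by simp), Limits.comp_zero]) ≫
      K.homologyπ 0
  have hε : cls ≫ ε = σ ≫ augmentation _ := by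
    simp only [cls, ε, Category.assoc, HomologicalComplex.homology_π_ι_assoc,
      HomologicalComplex.liftCycles_i_assoc]
    erw [HomologicalComplex.p_descOpcycles]
  have hcls : ε (cls 1) = 1 := by
    rw [← ConcreteCategory.comp_apply, hε]
    exact augmentation_freeMk s
  exact nontrivial_of_ne (cls 1) 0 fun h => by simp [h] at hcls

theorem Hq_subsingleton_of_isEmpty (X : Type) [TopologicalSpace X] [IsEmpty X] (n : ℕ) :
    Subsingleton (Hq n X) :=
  have : IsEmpty ((TopCat.toSSet.obj (TopCat.of X)) _⦋n⦌) :=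
    ⟨fun σ => isEmptyElim (TopCat.toSSetObjEquiv _ _ σ (Classical.arbitrary _))⟩
  freeChainComplex_homology_subsingleton _ n

theorem Hq_zero_nontrivial (X : Type) [TopologicalSpace X] [Nonempty X] :
    Nontrivial (Hq 0 X) :=
  freeChainComplex_homology_zero_nontrivial _
    ((TopCat.toSSetObjEquiv _ _).symm (ContinuousMap.const _ (Classical.arbitrary X)))

theorem nonempty_of_surjective_Hmap_zero {X Y : Type} [TopologicalSpace X] [TopologicalSpace Y]
    [Nonempty Y] (f : C(X, Y)) (hf : Function.Surjective (Hmap f 0)) : Nonempty X := by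
  by_contra hX
  have := not_nonempty_iff.mp hX
  have := Hq_subsingleton_of_isEmpty X 0
  have := Hq_zero_nontrivial Y
  exact not_subsingleton (Hq 0 Y) hf.subsingleton

theorem moore_approximation_bounds_homological_dimension_general
    {G X X' : Type} [Group G] [TopologicalSpace G]
    [TopologicalSpace X] [Nonempty X] [MulAction G X]
    [TopologicalSpace X'] [MulAction G X'] [ContinuousSMul G X']
    (φ : X → G) (hφc : Continuous φ)
    (hφe : ∀ (g : G) (x : X), φ (g • x) = g * φ x)
    (k : ℕ) (hk : 0 < k)
    (f : X' → X) (hfc : Continuous f)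
    (hfe : ∀ (g : G) (x' : X'), f (g • x') = g • f x')
    (hiso : ∀ r : ℕ, r < k → Function.Bijective (Hmap ⟨f, hfc⟩ r))
    (hvan : ∀ r : ℕ, k ≤ r → Subsingleton (Hq r X')) :
    ∀ m : ℕ, k ≤ m → Subsingleton (Hq m G) := by
  intro m hm
  have : Nonempty X' := nonempty_of_surjective_Hmap_zero _ (hiso 0 hk).2
  have := hvan m hm
  exact Hq_subsingleton_of_equivariant_map_to_group ⟨φ ∘ f, hφc.comp hfc⟩
    (fun g x' => by simp [hfe, hφe]) m

/-- **Moore approximations bound the homological dimension of the group.**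
If a nonempty `G`-space `X` admits a continuous `G`-equivariant map to `G` (with the left
translation action) and a `G`-equivariant Moore approximation `f : X' → X` of degree `k > 0`,
then `H_m(G;ℚ) = 0` for all `m ≥ k`, i.e. the rational homological dimension of `G`
is at most `k - 1`. -/
theorem moore_approximation_bounds_homological_dimension
    {G X X' : Type} [Group G] [TopologicalSpace G] [IsTopologicalGroup G]
    [TopologicalSpace X] [Nonempty X] [MulAction G X] [ContinuousSMul G X]
    [TopologicalSpace X'] [MulAction G X'] [ContinuousSMul G X']
    (φ : X → G) (hφc : Continuous φ)
    (hφe : ∀ (g : G) (x : X), φ (g • x) = g * φ x)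
    (k : ℕ) (hk : 0 < k)
    (f : X' → X) (hfc : Continuous f)
    (hfe : ∀ (g : G) (x' : X'), f (g • x') = g • f x')
    (hiso : ∀ r : ℕ, r < k → Function.Bijective (Hmap ⟨f, hfc⟩ r))
    (hvan : ∀ r : ℕ, k ≤ r → Subsingleton (Hq r X')) :
    ∀ m : ℕ, k ≤ m → Subsingleton (Hq m G) :=
  moore_approximation_bounds_homological_dimension_general φ hφc hφe k hk f hfc hfe hiso hvan
end
end

section
/- Let T and Σ be topological spaces, π : T → Σ and ρ : T → [0,∞) continuous maps, and ε : Σ → (0,∞) a continuous function. Set T_ε = { x ∈ T : ρ(x) < ε(π(x)) } and Σ×[0,ε) = { (s,t) ∈ Σ × [0,∞) : t < ε(s) }. Assume that the map (π,ρ) : T_ε → Σ×[0,ε) is proper and surjective. Then the set E = { x ∈ T_ε : ρ(x) = ε(π(x))/2 } is closed in T_ε, and the restriction π|_E : E → Σ is proper and surjective. -/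
/-!
`E` is the preimage under `(π, ρ)` of the graph of `ε / 2`, which is closed in `Σ × [0, ε)` and is
a copy of `Σ` via the section `s ↦ (s, ε s / 2)`. Up to this injective section, `π|_E` is
therefore the restriction of the proper map `(π, ρ)` to a closed subspace.
-/

open Function Set Set.Notation Topology

lemma isProperMap_of_comp_eq_comp_isClosedEmbedding {X X' Y Z : Type*} [TopologicalSpace X]
    [TopologicalSpace X'] [TopologicalSpace Y] [TopologicalSpace Z]
    {F : X → Y} {ι : X' → X} {h : X' → Z} {σ : Z → Y} (hF : IsProperMap F)
    (hι : IsClosedEmbedding ι) (hh : Continuous h) (hσ : Continuous σ) (hσ_inj : Injective σ)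
    (hcomm : σ ∘ h = F ∘ ι) : IsProperMap h :=
  isProperMap_of_comp_of_inj hh hσ (hcomm ▸ hF.comp hι.isProperMap) hσ_inj

section HalfSection

variable {S : Type*} {ε : S → ℝ}

noncomputable def halfSection (hε0 : ∀ s, 0 < ε s) (s : S) :
    {p : S × ℝ // 0 ≤ p.2 ∧ p.2 < ε p.1} :=
  ⟨(s, ε s / 2), (half_pos (hε0 s)).le, half_lt_self (hε0 s)⟩

lemma continuous_halfSection [TopologicalSpace S] (hε : Continuous ε) (hε0 : ∀ s, 0 < ε s) :
    Continuous (halfSection hε0) :=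
  (continuous_id.prodMk (hε.div_const 2)).subtype_mk _

lemma injective_halfSection (hε0 : ∀ s, 0 < ε s) : Injective (halfSection hε0) :=
  fun _ _ h => congrArg (fun p => p.1.1) h

end HalfSection

/-- **Point-set core of the construction of the link bundle** of the singular stratum of a
two-strata Thom–Mather stratified pseudomanifold.  Let `π : T → Σ`, `ρ : T → [0,∞)` be
continuous, `ε : Σ → (0,∞)` continuous, and set `T_ε = {x | ρ x < ε (π x)}`.  If
`(π,ρ) : T_ε → Σ×[0,ε)` is proper and surjective, then `E = {x ∈ T_ε | ρ x = ε (π x)/2}`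
is closed in `T_ε`, and `π|_E : E → Σ` is proper and surjective. -/
theorem link_sphere_closed_proper_surjective
    {T S : Type} [TopologicalSpace T] [TopologicalSpace S]
    (π : T → S) (ρ : T → ℝ) (ε : S → ℝ)
    (hπ : Continuous π) (hρ : Continuous ρ) (hε : Continuous ε)
    (hρ0 : ∀ x : T, 0 ≤ ρ x) (hε0 : ∀ s : S, 0 < ε s)
    (hproper : IsProperMap (fun x : {x : T // ρ x < ε (π x)} =>
      (⟨(π (x : T), ρ (x : T)), hρ0 (x : T), x.2⟩ :
        {p : S × ℝ // 0 ≤ p.2 ∧ p.2 < ε p.1})))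
    (hsurj : Function.Surjective (fun x : {x : T // ρ x < ε (π x)} =>
      (⟨(π (x : T), ρ (x : T)), hρ0 (x : T), x.2⟩ :
        {p : S × ℝ // 0 ≤ p.2 ∧ p.2 < ε p.1}))) :
    IsClosed {x : {x : T // ρ x < ε (π x)} | ρ (x : T) = ε (π (x : T)) / 2} ∧
    IsProperMap (fun x : {x : T // ρ x = ε (π x) / 2 ∧ ρ x < ε (π x)} => π (x : T)) ∧
    Function.Surjective
      (fun x : {x : T // ρ x = ε (π x) / 2 ∧ ρ x < ε (π x)} => π (x : T)) := by
  have hE : IsClosed {x : {x : T // ρ x < ε (π x)} | ρ (x : T) = ε (π (x : T)) / 2} :=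
    isClosed_eq (by fun_prop) (by fun_prop)
  have hsub : {x : T | ρ x = ε (π x) / 2 ∧ ρ x < ε (π x)} ⊆ {x | ρ x < ε (π x)} :=
    fun _ hx => hx.2
  have hι : IsClosedEmbedding (inclusion hsub) := by
    refine .inclusion hsub ?_
    rw [show _ ↓∩ {x | ρ x = ε (π x) / 2 ∧ ρ x < ε (π x)} =
        {x | ρ x < ε (π x)} ↓∩ {x | ρ x = ε (π x) / 2} from Set.ext fun x => and_iff_left x.2]
    exact hE
  refine ⟨hE, isProperMap_of_comp_eq_comp_isClosedEmbedding hproper hι (by fun_prop)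
    (continuous_halfSection hε hε0) (injective_halfSection hε0) ?_, fun s => ?_⟩
  · funext x
    exact Subtype.ext (Prod.ext rfl x.2.1.symm)
  · obtain ⟨x, hx⟩ := hsurj (halfSection hε0 s)
    have hπx : π x = s := congrArg (fun p => p.1.1) hx
    have hρx : ρ x = ε s / 2 := congrArg (fun p => p.1.2) hx
    exact ⟨⟨x, by rw [hπx, hρx], x.2⟩, hπx⟩
end
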